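/- Let n ≥ 3 be an integer. At every point (k,l) of the region R = {(k,l) ∈ ℝ² : k ≥ 1, l ≥ 1, k + l ≤ n − 1}, the Hessian matrix of f is negative definite; that is, ∂²f/∂k² (k,l) < 0 and (∂²f/∂k²)(∂²f/∂l²) − (∂²f/∂k∂l)² > 0 on R. Consequently f is strictly concave on R. -/

import Mathlib

open Filter Real

/-- The function `f(k,l)` from the proof of Theorem 1 (with parameter `n`):
`f(k,l) = (k+l+1)·ln n − k·ln k − l·ln l + k + l − ((k+l)²/2)·ln 2 − ((k+l)/2)·ln 2
          − (n−k−l)·(2^{−k} + 2^{−l})`, where `2^{−k} = exp(−k·ln 2)`. -/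
noncomputable def f (n : ℕ) (k l : ℝ) : ℝ :=
  (k + l + 1) * Real.log n - k * Real.log k - l * Real.log l + k + l
    - ((k + l) ^ 2 / 2) * Real.log 2 - ((k + l) / 2) * Real.log 2
    - ((n : ℝ) - k - l) * (Real.exp (-k * Real.log 2) + Real.exp (-l * Real.log 2))

/-- The region `R = {(k,l) : k ≥ 1, l ≥ 1, k + l ≤ n − 1}`. -/
def region (n : ℕ) : Set (ℝ × ℝ) :=
  {p : ℝ × ℝ | 1 ≤ p.1 ∧ 1 ≤ p.2 ∧ p.1 + p.2 ≤ (n : ℝ) - 1}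

/-- `(k, l)` is a critical point of `f n`: both partial derivatives vanish. -/
def IsCritPt (n : ℕ) (k l : ℝ) : Prop :=
  deriv (fun k' => f n k' l) k = 0 ∧ deriv (fun l' => f n k l') l = 0

/-! On `R` we have `2^{-k}, 2^{-l} ≤ 1/2 < ln 2` and `n - k - l ≥ 1`. The second of these makes
`-∂²f/∂k² ≥ ln 2 · (1 + (2 + ln 2) 2^{-k})` (and symmetrically in `l`), and the first makes the
product of these two bounds exceed `(∂²f/∂k∂l)² = ln² 2 · (1 + 2^{-k} + 2^{-l})²`. Strict concavity
on the convex set `R` then follows by restricting `f` to segments: the second derivative along a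
segment is the Hessian quadratic form in its direction. -/

open Topology Set AffineMap

noncomputable section

/-- `fK n x y`, `fKK n x y` and `fKL x y` are `∂f/∂k`, `∂²f/∂k²` and `∂²f/∂k∂l` at `(x, y)`;
since `f n k l = f n l k`, the `l`-derivatives at `(x, y)` are `fK n y x` and `fKK n y x`. -/
def fK (n : ℕ) (x y : ℝ) : ℝ :=
  log n - log x - (x + y) * log 2 - log 2 / 2
    + exp (-x * log 2) + exp (-y * log 2)
    + ((n : ℝ) - x - y) * log 2 * exp (-x * log 2)

def fKK (n : ℕ) (x y : ℝ) : ℝ :=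
  -x⁻¹ - log 2 - 2 * log 2 * exp (-x * log 2)
    - ((n : ℝ) - x - y) * log 2 ^ 2 * exp (-x * log 2)

def fKL (x y : ℝ) : ℝ :=
  -log 2 - log 2 * exp (-x * log 2) - log 2 * exp (-y * log 2)

end

theorem f_comm (n : ℕ) (k l : ℝ) : f n k l = f n l k := by
  unfold f; ring

theorem fKL_comm (x y : ℝ) : fKL x y = fKL y x := by
  unfold fKL; ring

section Derivatives

variable {n : ℕ} {x y : ℝ → ℝ} {x' y' t k l : ℝ}

theorem HasDerivAt.f_comp (hx : HasDerivAt x x' t) (hy : HasDerivAt y y' t) (hx0 : 0 < x t)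
    (hy0 : 0 < y t) :
    HasDerivAt (fun s => f n (x s) (y s)) (x' * fK n (x t) (y t) + y' * fK n (y t) (x t)) t := by
  have hxlog := (Real.hasDerivAt_mul_log hx0.ne').comp t hx
  have hylog := (Real.hasDerivAt_mul_log hy0.ne').comp t hy
  have hxexp := (hx.neg.mul_const (Real.log 2)).exp
  have hyexp := (hy.neg.mul_const (Real.log 2)).exp
  unfold f
  refine (((((((hx.add hy).add_const 1).mul_const (Real.log n)).sub hxlog).sub hylog).add hx).add hy
    |>.sub ((((hx.add hy).pow 2).div_const 2).mul_const (Real.log 2))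
    |>.sub (((hx.add hy).div_const 2).mul_const (Real.log 2))
    |>.sub ((((hasDerivAt_const t (n : ℝ)).sub hx).sub hy).mul (hxexp.add hyexp))).congr_deriv ?_
  unfold fK
  simp only [Pi.add_apply, Pi.sub_apply, Pi.neg_apply]
  ring

theorem HasDerivAt.fK_comp (hx : HasDerivAt x x' t) (hy : HasDerivAt y y' t) (hx0 : 0 < x t) :
    HasDerivAt (fun s => fK n (x s) (y s)) (x' * fKK n (x t) (y t) + y' * fKL (x t) (y t)) t := by
  have hxexp := (hx.neg.mul_const (Real.log 2)).exp
  have hyexp := (hy.neg.mul_const (Real.log 2)).exp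
  unfold fK
  refine ((((hasDerivAt_const t (Real.log n)).sub ((Real.hasDerivAt_log hx0.ne').comp t hx)).sub
    ((hx.add hy).mul_const (Real.log 2))).sub_const (Real.log 2 / 2)).add hxexp |>.add hyexp
    |>.add (((((hasDerivAt_const t (n : ℝ)).sub hx).sub hy).mul_const (Real.log 2)).mul hxexp)
    |>.congr_deriv ?_
  unfold fKK fKL
  simp only [Pi.sub_apply, Pi.neg_apply]
  ring

theorem hasDerivAt_f_left (hk : 0 < k) (hl : 0 < l) :
    HasDerivAt (fun k' => f n k' l) (fK n k l) k := by
  simpa using (hasDerivAt_id k).f_comp (hasDerivAt_const k l) hk hl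

theorem hasDerivAt_fK_left (hk : 0 < k) : HasDerivAt (fun k' => fK n k' l) (fKK n k l) k := by
  simpa using (hasDerivAt_id k).fK_comp (hasDerivAt_const k l) hk

theorem hasDerivAt_fK_right (hk : 0 < k) : HasDerivAt (fun l' => fK n k l') (fKL k l) l := by
  simpa using (hasDerivAt_const l k).fK_comp (hasDerivAt_id l) hk

theorem iterate_deriv_two_eq_of_hasDerivAt {g g' : ℝ → ℝ} {g'' : ℝ}
    (hg : ∀ᶠ s in 𝓝 t, HasDerivAt g (g' s) s) (hg' : HasDerivAt g' g'' t) :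
    deriv^[2] g t = g'' := by
  rw [Function.iterate_succ_apply', Function.iterate_one,
    Filter.EventuallyEq.deriv_eq (hg.mono fun s hs => hs.deriv), hg'.deriv]

theorem iteratedDeriv_two_f_left (hk : 0 < k) (hl : 0 < l) :
    iteratedDeriv 2 (fun k' => f n k' l) k = fKK n k l := by
  rw [iteratedDeriv_eq_iterate]
  exact iterate_deriv_two_eq_of_hasDerivAt
    ((eventually_gt_nhds hk).mono fun _ hx => hasDerivAt_f_left hx hl) (hasDerivAt_fK_left hk)

theorem iteratedDeriv_two_f_right (hk : 0 < k) (hl : 0 < l) :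
    iteratedDeriv 2 (fun l' => f n k l') l = fKK n l k := by
  simp_rw [f_comm n k]
  exact iteratedDeriv_two_f_left hl hk

theorem deriv_deriv_f (hk : 0 < k) (hl : 0 < l) :
    deriv (fun l' => deriv (fun k' => f n k' l') k) l = fKL k l := by
  rw [Filter.EventuallyEq.deriv_eq
    ((eventually_gt_nhds hl).mono fun _ hy => (hasDerivAt_f_left (n := n) hk hy).deriv)]
  exact (hasDerivAt_fK_right hk).deriv

end Derivatives

section Hessian

variable {n : ℕ} {k l : ℝ}

theorem exp_neg_mul_log_two_le_half {x : ℝ} (hx : 1 ≤ x) : exp (-x * log 2) ≤ 1 / 2 := by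
  calc exp (-x * log 2) ≤ exp (-log 2) := by
        gcongr
        nlinarith [log_pos one_lt_two]
    _ = 1 / 2 := by rw [exp_neg, exp_log two_pos, one_div]

theorem fKK_neg (hk : 0 ≤ k) (hkl : k + l ≤ n) : fKK n k l < 0 := by
  have hlog : 0 < log 2 := log_pos one_lt_two
  have hm : 0 ≤ (n : ℝ) - k - l := by linarith
  unfold fKK
  nlinarith [inv_nonneg.2 hk, mul_pos hlog (exp_pos (-k * log 2)),
    mul_nonneg (mul_nonneg hm (sq_nonneg (log 2))) (exp_pos (-k * log 2)).le]

theorem sq_one_add_add_lt {a E F : ℝ} (ha : 1 / 2 < a) (hE : 0 < E) (hE' : E ≤ 1 / 2)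
    (hF : 0 < F) (hF' : F ≤ 1 / 2) :
    (1 + E + F) ^ 2 < (1 + (2 + a) * E) * (1 + (2 + a) * F) := by
  nlinarith [mul_nonneg hE.le (by linarith : 0 ≤ a - E), mul_nonneg hF.le (by linarith : 0 ≤ a - F),
    mul_pos hE hF, mul_pos (by linarith : 0 < a) (mul_pos hE hF)]

theorem fKL_sq_lt_fKK_mul_fKK (hk : 1 ≤ k) (hl : 1 ≤ l) (hkl : k + l ≤ n - 1) :
    fKL k l ^ 2 < fKK n k l * fKK n l k := by
  set a := log 2
  set E := exp (-k * a)
  set F := exp (-l * a)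
  have ha : 1 / 2 < a := by linarith [log_two_gt_d9]
  have ha0 : 0 < a := by linarith
  have hE : 0 < E := exp_pos _
  have hF : 0 < F := exp_pos _
  have hkk : a * (1 + (2 + a) * E) ≤ -fKK n k l := by
    unfold fKK
    nlinarith [inv_nonneg.2 (zero_le_one.trans hk),
      mul_nonneg (mul_nonneg (by linarith : (0 : ℝ) ≤ n - k - l - 1) (sq_nonneg a)) hE.le]
  have hll : a * (1 + (2 + a) * F) ≤ -fKK n l k := by
    unfold fKK
    nlinarith [inv_nonneg.2 (zero_le_one.trans hl),
      mul_nonneg (mul_nonneg (by linarith : (0 : ℝ) ≤ n - l - k - 1) (sq_nonneg a)) hF.le]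
  calc fKL k l ^ 2 = a ^ 2 * (1 + E + F) ^ 2 := by unfold fKL; ring
    _ < a ^ 2 * ((1 + (2 + a) * E) * (1 + (2 + a) * F)) := by
        gcongr
        exact sq_one_add_add_lt ha hE (exp_neg_mul_log_two_le_half hk) hF
          (exp_neg_mul_log_two_le_half hl)
    _ = (a * (1 + (2 + a) * E)) * (a * (1 + (2 + a) * F)) := by ring
    _ ≤ (-fKK n k l) * (-fKK n l k) :=
        mul_le_mul hkk hll (by positivity) ((by positivity : (0 : ℝ) ≤ _).trans hkk)
    _ = fKK n k l * fKK n l k := by ring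

end Hessian

theorem quadratic_neg_of_neg_of_sq_lt {P Q R u v : ℝ} (hP : P < 0) (hQ : Q ^ 2 < P * R)
    (huv : u ≠ 0 ∨ v ≠ 0) : u ^ 2 * P + 2 * u * v * Q + v ^ 2 * R < 0 := by
  rcases eq_or_ne v 0 with rfl | hv
  · have hu : u ≠ 0 := huv.resolve_right (not_not.2 rfl)
    have hu2 : 0 < u ^ 2 := by positivity
    nlinarith
  · -- `P * (u²P + 2uvQ + v²R) = (uP + vQ)² + v²(PR - Q²)`
    have hv2 : 0 < v ^ 2 := by positivity
    nlinarith [sq_nonneg (u * P + v * Q), mul_pos hv2 (sub_pos.2 hQ)]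

theorem strictConcaveOn_of_lineMap {𝕜 E β : Type*} [Field 𝕜] [LinearOrder 𝕜]
    [IsStrictOrderedRing 𝕜] [AddCommGroup E] [Module 𝕜 E] [AddCommMonoid β] [PartialOrder β]
    [SMul 𝕜 β] {s : Set E} {g : E → β} (hs : Convex 𝕜 s)
    (h : ∀ p ∈ s, ∀ q ∈ s, p ≠ q → StrictConcaveOn 𝕜 (Icc (0 : 𝕜) 1) (g ∘ lineMap p q)) :
    StrictConcaveOn 𝕜 s g := by
  refine ⟨hs, fun p hp q hq hpq a b ha hb hab => ?_⟩
  obtain rfl : a = 1 - b := eq_sub_of_add_eq hab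
  have := (h p hp q hq hpq).2 (left_mem_Icc.2 zero_le_one) (right_mem_Icc.2 zero_le_one)
    zero_ne_one ha hb hab
  simp only [Function.comp_apply, lineMap_apply_zero, lineMap_apply_one, smul_eq_mul, mul_zero,
    mul_one, zero_add] at this
  rwa [lineMap_apply_module] at this

theorem convex_region (n : ℕ) : Convex ℝ (region n) :=
  (convex_halfSpace_ge (LinearMap.fst ℝ ℝ ℝ).isLinear 1).inter
    ((convex_halfSpace_ge (LinearMap.snd ℝ ℝ ℝ).isLinear 1).inter
      (convex_halfSpace_le (LinearMap.fst ℝ ℝ ℝ + LinearMap.snd ℝ ℝ ℝ).isLinear _))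

theorem strictConcaveOn_f_comp_lineMap {n : ℕ} {p q : ℝ × ℝ} (hp : p ∈ region n)
    (hq : q ∈ region n) (hpq : p ≠ q) :
    StrictConcaveOn ℝ (Icc (0 : ℝ) 1) ((fun p : ℝ × ℝ => f n p.1 p.2) ∘ lineMap p q) := by
  set x : ℝ → ℝ := ⇑(lineMap (k := ℝ) p.1 q.1)
  set y : ℝ → ℝ := ⇑(lineMap (k := ℝ) p.2 q.2)
  have hmem (t : ℝ) (ht : t ∈ Icc 0 1) : 1 ≤ x t ∧ 1 ≤ y t ∧ x t + y t ≤ n - 1 := by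
    have h := (convex_region n).lineMap_mem hp hq ht
    simp only [region, mem_ofPred_eq, fst_lineMap, snd_lineMap] at h
    exact h
  have hderiv (t : ℝ) (ht : t ∈ Icc 0 1) : HasDerivAt (fun s => f n (x s) (y s))
      ((q.1 - p.1) * fK n (x t) (y t) + (q.2 - p.2) * fK n (y t) (x t)) t := by
    obtain ⟨hxt, hyt, -⟩ := hmem t ht
    exact hasDerivAt_lineMap.f_comp hasDerivAt_lineMap (by linarith) (by linarith)
  have hdir : q.1 - p.1 ≠ 0 ∨ q.2 - p.2 ≠ 0 := by
    by_contra! h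
    exact hpq (Prod.ext (sub_eq_zero.1 h.1).symm (sub_eq_zero.1 h.2).symm)
  have hcomp : (fun p : ℝ × ℝ => f n p.1 p.2) ∘ lineMap p q = fun s => f n (x s) (y s) := by
    ext s; simp [x, y]
  rw [hcomp]
  refine strictConcaveOn_of_deriv2_neg (convex_Icc 0 1)
    (fun t ht => (hderiv t ht).continuousAt.continuousWithinAt) fun t ht => ?_
  rw [interior_Icc] at ht
  obtain ⟨hxt, hyt, hxyt⟩ := hmem t (Ioo_subset_Icc_self ht)
  have hderiv2 : HasDerivAt
      (fun s => (q.1 - p.1) * fK n (x s) (y s) + (q.2 - p.2) * fK n (y s) (x s))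
      ((q.1 - p.1) * ((q.1 - p.1) * fKK n (x t) (y t) + (q.2 - p.2) * fKL (x t) (y t))
        + (q.2 - p.2) * ((q.2 - p.2) * fKK n (y t) (x t) + (q.1 - p.1) * fKL (y t) (x t))) t :=
    ((hasDerivAt_lineMap.fK_comp hasDerivAt_lineMap (by linarith)).const_mul _).add
      ((hasDerivAt_lineMap.fK_comp hasDerivAt_lineMap (by linarith)).const_mul _)
  rw [iterate_deriv_two_eq_of_hasDerivAt (eventually_of_mem (Ioo_mem_nhds ht.1 ht.2)
    fun s hs => hderiv s (Ioo_subset_Icc_self hs)) hderiv2, fKL_comm (y t)]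
  convert quadratic_neg_of_neg_of_sq_lt (fKK_neg (by linarith) (by linarith))
    (fKL_sq_lt_fKK_mul_fKK hxt hyt hxyt) hdir using 1
  ring

theorem hessian_negdef_and_strictConcave_general (n : ℕ) :
    (∀ k l : ℝ, 1 ≤ k → 1 ≤ l → k + l ≤ (n : ℝ) - 1 →
      iteratedDeriv 2 (fun k' => f n k' l) k < 0 ∧
      0 < iteratedDeriv 2 (fun k' => f n k' l) k * iteratedDeriv 2 (fun l' => f n k l') l
            - (deriv (fun l' => deriv (fun k' => f n k' l') k) l) ^ 2) ∧
    StrictConcaveOn ℝ (region n) (fun p : ℝ × ℝ => f n p.1 p.2) := by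
  refine ⟨fun k l hk hl hkl => ?_, strictConcaveOn_of_lineMap (convex_region n)
    fun p hp q hq hpq => strictConcaveOn_f_comp_lineMap hp hq hpq⟩
  have hk0 : 0 < k := by linarith
  have hl0 : 0 < l := by linarith
  rw [iteratedDeriv_two_f_left hk0 hl0, iteratedDeriv_two_f_right hk0 hl0, deriv_deriv_f hk0 hl0]
  exact ⟨fKK_neg hk0.le (by linarith), sub_pos.2 (fKL_sq_lt_fKK_mul_fKK hk hl hkl)⟩

/-- For `n ≥ 3`, at every point of the region
`R = {(k,l) : k ≥ 1, l ≥ 1, k + l ≤ n − 1}` the Hessian of `f` is negative definite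
(`∂²f/∂k² < 0` and the Hessian determinant is positive); consequently `f` is strictly
concave on `R`. -/
theorem hessian_negdef_and_strictConcave (n : ℕ) (hn : 3 ≤ n) :
    (∀ k l : ℝ, 1 ≤ k → 1 ≤ l → k + l ≤ (n : ℝ) - 1 →
      iteratedDeriv 2 (fun k' => f n k' l) k < 0 ∧
      0 < iteratedDeriv 2 (fun k' => f n k' l) k * iteratedDeriv 2 (fun l' => f n k l') l
            - (deriv (fun l' => deriv (fun k' => f n k' l') k) l) ^ 2) ∧
    StrictConcaveOn ℝ (region n) (fun p : ℝ × ℝ => f n p.1 p.2) :=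
  hessian_negdef_and_strictConcave_general n
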